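/- arXiv:2408.01857 — 3 statements merged into one kernel-verified Lean document; each statement's English description precedes it below -/
import Mathlib

section
/- Let (X, d) be a complete metric space, let a < b, and let γ : (a, b) → X be a curve that is absolutely continuous in the sense that there exists m ∈ L¹(a, b), m ≥ 0, with d(γ(s), γ(t)) ≤ ∫_s^t m(r) dr for all a < s ≤ t < b. Then for Lebesgue-almost every t ∈ (a, b) the metric derivative |γ'|(t) := lim_{s→t} d(γ(s), γ(t)) / |s − t| exists; moreover there is a nonnegative function v ∈ L¹(a, b) such that v(t) equals this limit for a.e. t, and v(t) ≤ m(t) for a.e. t ∈ (a, b), for every m satisfying the above absolute-continuity condition. -/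
open Filter Topology MeasureTheory

/-- A curve `γ` on `(a, b)` with values in a metric space `X` admits `m` as an
upper gradient bound if `m` is nonnegative, integrable on `(a, b)`, and
`d(γ(s), γ(t)) ≤ ∫_s^t m(r) dr` for all `a < s ≤ t < b`. -/
def IsACBound {X : Type*} [MetricSpace X] (a b : ℝ) (γ : ℝ → X) (m : ℝ → ℝ) : Prop :=
  IntegrableOn m (Set.Ioo a b) ∧ (∀ r, 0 ≤ m r) ∧
    ∀ s t : ℝ, a < s → s ≤ t → t < b → dist (γ s) (γ t) ≤ ∫ r in s..t, m r

open Set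

/-! Take a countable set `D` dense in the image of `γ`. Each `φₓ = d(γ(·), x)`, `x ∈ D`, is
dominated by `γ` and hence by the primitive of any admissible `m`, so it is absolutely continuous
and `|φₓ'| ≤ m` at every Lebesgue point of `m`. Thus `v = supₓ |φₓ'| ≤ m` a.e., and the
fundamental theorem of calculus for the `φₓ`, combined with `d(y, z) = supₓ |φₓ(y) - φₓ(z)|` on the
closure of `D`, shows that `v` is itself admissible. At a Lebesgue point of `v` admissibility bounds
the difference quotients of `γ` above by `v(t) + o(1)`, while `d(γ(s), γ(t)) ≥ |φₓ(s) - φₓ(t)|`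
bounds them below by `|φₓ'(t)| - o(1)` for every `x`, so they converge to `v(t)`. -/

lemma AbsolutelyContinuousOnInterval.of_dist_le {X Y : Type*} [PseudoMetricSpace X]
    [PseudoMetricSpace Y] {f : ℝ → X} {g : ℝ → Y} {a b : ℝ}
    (hg : AbsolutelyContinuousOnInterval g a b)
    (hfg : ∀ x ∈ uIcc a b, ∀ y ∈ uIcc a b, dist (f x) (f y) ≤ dist (g x) (g y)) :
    AbsolutelyContinuousOnInterval f a b := by
  rw [absolutelyContinuousOnInterval_iff] at hg ⊢
  intro ε hε
  obtain ⟨δ, hδ, hg⟩ := hg ε hε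
  refine ⟨δ, hδ, fun E hE hlen => lt_of_le_of_lt ?_ (hg E hE hlen)⟩
  exact Finset.sum_le_sum fun i hi => hfg _ (hE.1 i hi).1 _ (hE.1 i hi).2

lemma AbsolutelyContinuousOnInterval.abs_sub_le_integral_abs_deriv {f : ℝ → ℝ} {a b : ℝ}
    (hf : AbsolutelyContinuousOnInterval f a b) (hab : a ≤ b) :
    |f b - f a| ≤ ∫ x in a..b, |deriv f x| := by
  rw [← hf.integral_deriv_eq_sub]
  exact intervalIntegral.abs_integral_le_integral_abs hab

lemma dist_le_of_forall_abs_dist_sub_le {X : Type*} [PseudoMetricSpace X] {D : Set X} {y z : X}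
    {C : ℝ} (hy : y ∈ closure D) (h : ∀ x ∈ D, |dist z x - dist y x| ≤ C) : dist z y ≤ C := by
  refine le_of_forall_pos_le_add fun ε hε => ?_
  obtain ⟨x, hxD, hyx⟩ := Metric.mem_closure_iff.1 hy (ε / 2) (half_pos hε)
  have := (abs_le.1 (h x hxD)).2
  calc dist z y ≤ dist z x + dist x y := dist_triangle _ _ _
    _ ≤ C + ε := by rw [dist_comm x y]; linarith

section DifferenceQuotients

variable {X : Type*} [PseudoMetricSpace X] {t : ℝ}

lemma abs_slope_eq_dist_div (f : ℝ → ℝ) (t s : ℝ) :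
    |slope f t s| = dist (f s) (f t) / |s - t| := by
  rw [slope_def_field, abs_div, Real.dist_eq]

lemma eventually_dist_div_lt_of_hasDerivAt {g : ℝ → X} {G : ℝ → ℝ} {G' c : ℝ}
    (hG : HasDerivAt G G' t) (hgG : ∀ᶠ s in 𝓝 t, dist (g s) (g t) ≤ dist (G s) (G t))
    (hc : |G'| < c) : ∀ᶠ s in 𝓝[≠] t, dist (g s) (g t) / |s - t| < c := by
  have hslope := (hasDerivAt_iff_tendsto_slope.1 hG).abs.eventually (gt_mem_nhds hc)
  filter_upwards [hslope, nhdsWithin_le_nhds hgG] with s hs hs'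
  rw [abs_slope_eq_dist_div] at hs
  exact (div_le_div_of_nonneg_right hs' (abs_nonneg _)).trans_lt hs

lemma eventually_lt_dist_div_of_lt_abs_deriv {f : ℝ → ℝ} {g : ℝ → X} {c : ℝ}
    (hfg : ∀ᶠ s in 𝓝 t, dist (f s) (f t) ≤ dist (g s) (g t)) (hc : c < |deriv f t|) :
    ∀ᶠ s in 𝓝[≠] t, c < dist (g s) (g t) / |s - t| := by
  by_cases hf : DifferentiableAt ℝ f t
  · have hslope :=
      (hasDerivAt_iff_tendsto_slope.1 hf.hasDerivAt).abs.eventually (lt_mem_nhds hc)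
    filter_upwards [hslope, nhdsWithin_le_nhds hfg] with s hs hs'
    rw [abs_slope_eq_dist_div] at hs
    exact hs.trans_le (div_le_div_of_nonneg_right hs' (abs_nonneg _))
  · rw [deriv_zero_of_not_differentiableAt hf, abs_zero] at hc
    exact .of_forall fun s => hc.trans_le (by positivity)

lemma abs_deriv_le_of_hasDerivAt {f G : ℝ → ℝ} {G' : ℝ} (hG : HasDerivAt G G' t)
    (hfG : ∀ᶠ s in 𝓝 t, dist (f s) (f t) ≤ dist (G s) (G t)) : |deriv f t| ≤ |G'| := by
  refine le_of_forall_gt_imp_ge_of_dense fun c hc => le_of_not_gt fun hfc => ?_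
  have hlow := eventually_lt_dist_div_of_lt_abs_deriv (g := f) (.of_forall fun _ => le_rfl) hfc
  have hup := eventually_dist_div_lt_of_hasDerivAt hG hfG hc
  obtain ⟨s, hs, hs'⟩ := (hlow.and hup).exists
  exact hs.not_gt hs'

end DifferenceQuotients

section SupAbsDerivDist

variable {X : Type*} [PseudoMetricSpace X] {γ : ℝ → X} {D : Set X} {t c : ℝ}

/-- The function `v = sup_{x ∈ D} |φₓ'|` with `φₓ = d(γ(·), x)`. Where the family is unbounded
the real supremum is `0`; an admissible bound rules this out almost everywhere. -/
noncomputable def supAbsDerivDist (γ : ℝ → X) (D : Set X) (t : ℝ) : ℝ :=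
  ⨆ x : D, |deriv (fun r => dist (γ r) x) t|

lemma supAbsDerivDist_nonneg : 0 ≤ supAbsDerivDist γ D t :=
  Real.iSup_nonneg fun _ => abs_nonneg _

lemma measurable_supAbsDerivDist [Countable D] : Measurable (supAbsDerivDist γ D) :=
  Measurable.iSup fun _ => (measurable_deriv _).abs

lemma supAbsDerivDist_le (h : ∀ x ∈ D, |deriv (fun r => dist (γ r) x) t| ≤ c) (hc : 0 ≤ c) :
    supAbsDerivDist γ D t ≤ c :=
  Real.iSup_le (fun x => h x x.2) hc

lemma abs_deriv_dist_le_supAbsDerivDist (h : ∀ x ∈ D, |deriv (fun r => dist (γ r) x) t| ≤ c)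
    {x : X} (hx : x ∈ D) : |deriv (fun r => dist (γ r) x) t| ≤ supAbsDerivDist γ D t :=
  le_ciSup (f := fun y : D => |deriv (fun r => dist (γ r) y) t|)
    ⟨c, forall_mem_range.2 fun y => h y y.2⟩ ⟨x, hx⟩

lemma eventually_lt_dist_div_of_lt_supAbsDerivDist (hc : c < supAbsDerivDist γ D t) :
    ∀ᶠ s in 𝓝[≠] t, c < dist (γ s) (γ t) / |s - t| := by
  rcases lt_or_ge c 0 with hc0 | hc0
  · exact .of_forall fun s => hc0.trans_le (by positivity)
  · obtain ⟨x, -, hx⟩ : ∃ x ∈ D, c < |deriv (fun r => dist (γ r) x) t| := by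
      by_contra! h
      exact hc.not_ge (supAbsDerivDist_le h hc0)
    exact eventually_lt_dist_div_of_lt_abs_deriv
      (.of_forall fun _ => dist_dist_dist_le_left _ _ _) hx

end SupAbsDerivDist

namespace IsACBound

variable {X : Type*} [MetricSpace X] {a b : ℝ} {γ : ℝ → X} {m : ℝ → ℝ}

lemma intervalIntegrable (hm : IsACBound a b γ m) (hab : a ≤ b) :
    IntervalIntegrable m volume a b :=
  (intervalIntegrable_iff_integrableOn_Ioo_of_le hab).2 hm.1

lemma dist_le (hm : IsACBound a b γ m) (hab : a ≤ b) {u w : ℝ} (hu : u ∈ Ioo a b)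
    (hw : w ∈ Ioo a b) : dist (γ u) (γ w) ≤ dist (∫ r in a..u, m r) (∫ r in a..w, m r) := by
  wlog huw : u ≤ w generalizing u w
  · rw [dist_comm, dist_comm (∫ r in a..u, m r)]
    exact this hw hu (le_of_not_ge huw)
  have hint : ∀ {p}, p ∈ Ioo a b → IntervalIntegrable m volume a p := fun hp =>
    (hm.intervalIntegrable hab).mono_set
      (uIcc_subset_uIcc left_mem_uIcc (Icc_subset_uIcc (Ioo_subset_Icc_self hp)))
  calc dist (γ u) (γ w) ≤ ∫ r in u..w, m r := hm.2.2 u w hu.1 huw hw.2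
    _ = (∫ r in a..w, m r) - ∫ r in a..u, m r :=
      (intervalIntegral.integral_interval_sub_left (hint hw) (hint hu)).symm
    _ ≤ dist (∫ r in a..u, m r) (∫ r in a..w, m r) := by
      rw [dist_comm, Real.dist_eq]
      exact le_abs_self _

lemma absolutelyContinuousOnInterval (hm : IsACBound a b γ m) (hab : a ≤ b) {s t : ℝ}
    (hs : s ∈ Ioo a b) (ht : t ∈ Ioo a b) : AbsolutelyContinuousOnInterval γ s t := by
  have hst : uIcc s t ⊆ Ioo a b := ordConnected_Ioo.uIcc_subset hs ht
  have hF := ((hm.intervalIntegrable hab).absolutelyContinuousOnInterval_intervalIntegral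
    left_mem_uIcc).mono (hst.trans (Ioo_subset_Icc_self.trans Icc_subset_uIcc))
  exact hF.of_dist_le fun u hu w hw => hm.dist_le hab (hst hu) (hst hw)

lemma absolutelyContinuousOnInterval_dist (hm : IsACBound a b γ m) (hab : a ≤ b) {s t : ℝ}
    (hs : s ∈ Ioo a b) (ht : t ∈ Ioo a b) (x : X) :
    AbsolutelyContinuousOnInterval (fun r => dist (γ r) x) s t :=
  (hm.absolutelyContinuousOnInterval hab hs ht).of_dist_le fun _ _ _ _ =>
    dist_dist_dist_le_left _ _ _

lemma continuousOn (hm : IsACBound a b γ m) (hab : a ≤ b) : ContinuousOn γ (Ioo a b) := by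
  intro u hu
  have hF : ContinuousAt (fun w => ∫ r in a..w, m r) u :=
    ((hm.intervalIntegrable hab).absolutelyContinuousOnInterval_intervalIntegral
      left_mem_uIcc).continuousOn.continuousAt
      (uIcc_of_le hab ▸ Icc_mem_nhds hu.1 hu.2)
  refine ContinuousAt.continuousWithinAt <| tendsto_iff_dist_tendsto_zero.2 <|
    squeeze_zero' (.of_forall fun _ => dist_nonneg) ?_ (tendsto_iff_dist_tendsto_zero.1 hF)
  filter_upwards [Ioo_mem_nhds hu.1 hu.2] with w hw using hm.dist_le hab hw hu

lemma ae_hasDerivAt_integral (hm : IsACBound a b γ m) (hab : a ≤ b) :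
    ∀ᵐ t, t ∈ Ioo a b → HasDerivAt (fun u => ∫ r in a..u, m r) (m t) t := by
  filter_upwards [(hm.intervalIntegrable hab).ae_hasDerivAt_integral] with t ht hmem
  exact ht (Ioo_subset_Icc_self.trans Icc_subset_uIcc hmem) a left_mem_uIcc

lemma ae_abs_deriv_dist_le (hm : IsACBound a b γ m) (hab : a ≤ b) :
    ∀ᵐ t, t ∈ Ioo a b → ∀ x : X, |deriv (fun r => dist (γ r) x) t| ≤ m t := by
  filter_upwards [hm.ae_hasDerivAt_integral hab] with t hF ht x
  rw [← abs_of_nonneg (hm.2.1 t)]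
  refine abs_deriv_le_of_hasDerivAt (hF ht) ?_
  filter_upwards [Ioo_mem_nhds ht.1 ht.2] with s hs
  exact (dist_dist_dist_le_left _ _ _).trans (hm.dist_le hab hs ht)

lemma ae_eventually_dist_div_lt (hm : IsACBound a b γ m) (hab : a ≤ b) :
    ∀ᵐ t, t ∈ Ioo a b → ∀ c, m t < c → ∀ᶠ s in 𝓝[≠] t, dist (γ s) (γ t) / |s - t| < c := by
  filter_upwards [hm.ae_hasDerivAt_integral hab] with t hF ht c hc
  refine eventually_dist_div_lt_of_hasDerivAt (hF ht) ?_ (by rwa [abs_of_nonneg (hm.2.1 t)])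
  filter_upwards [Ioo_mem_nhds ht.1 ht.2] with s hs using hm.dist_le hab hs ht

lemma ae_supAbsDerivDist_le (hm : IsACBound a b γ m) (hab : a ≤ b) (D : Set X) :
    ∀ᵐ t, t ∈ Ioo a b → supAbsDerivDist γ D t ≤ m t := by
  filter_upwards [hm.ae_abs_deriv_dist_le hab] with t h ht
  exact supAbsDerivDist_le (fun x _ => h ht x) (hm.2.1 t)

lemma integrableOn_supAbsDerivDist (hm : IsACBound a b γ m) (hab : a ≤ b) (D : Set X)
    [Countable D] : IntegrableOn (supAbsDerivDist γ D) (Ioo a b) := by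
  refine hm.1.mono' measurable_supAbsDerivDist.aestronglyMeasurable <|
    (ae_restrict_iff' measurableSet_Ioo).2 ?_
  filter_upwards [hm.ae_supAbsDerivDist_le hab D] with t h ht
  rw [Real.norm_of_nonneg supAbsDerivDist_nonneg]
  exact h ht

lemma isACBound_supAbsDerivDist (hm : IsACBound a b γ m) (hab : a ≤ b) {D : Set X}
    [Countable D] (hD : γ '' Ioo a b ⊆ closure D) : IsACBound a b γ (supAbsDerivDist γ D) := by
  have hv := hm.integrableOn_supAbsDerivDist hab D
  refine ⟨hv, fun _ => supAbsDerivDist_nonneg, fun s t hs hst ht => ?_⟩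
  have hs' : s ∈ Ioo a b := ⟨hs, hst.trans_lt ht⟩
  have ht' : t ∈ Ioo a b := ⟨hs.trans_le hst, ht⟩
  have hsub : Icc s t ⊆ Ioo a b := Icc_subset_Ioo hs ht
  refine dist_le_of_forall_abs_dist_sub_le (hD (mem_image_of_mem γ ht')) fun x hx => ?_
  have hφ := hm.absolutelyContinuousOnInterval_dist hab hs' ht' x
  have hderiv : (fun r => |deriv (fun r => dist (γ r) x) r|)
      ≤ᵐ[volume.restrict (Icc s t)] supAbsDerivDist γ D := by
    refine (ae_restrict_iff' measurableSet_Icc).2 ?_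
    filter_upwards [hm.ae_abs_deriv_dist_le hab] with r h hr
    exact abs_deriv_dist_le_supAbsDerivDist (fun y _ => h (hsub hr) y) hx
  calc |dist (γ s) x - dist (γ t) x| = |dist (γ t) x - dist (γ s) x| := abs_sub_comm _ _
    _ ≤ ∫ r in s..t, |deriv (fun r => dist (γ r) x) r| :=
      hφ.abs_sub_le_integral_abs_deriv hst
    _ ≤ ∫ r in s..t, supAbsDerivDist γ D r :=
      intervalIntegral.integral_mono_ae_restrict hst hφ.intervalIntegrable_deriv.abs
        ((intervalIntegrable_iff_integrableOn_Ioo_of_le hst).2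
          (hv.mono_set (Ioo_subset_Icc_self.trans hsub))) hderiv

end IsACBound

theorem metric_derivative_exists_ae_and_minimal_general {X : Type*} [MetricSpace X]
    (a b : ℝ) (hab : a < b) (γ : ℝ → X)
    (hAC : ∃ m : ℝ → ℝ, IsACBound a b γ m) :
    ∃ v : ℝ → ℝ, IntegrableOn v (Set.Ioo a b) ∧ (∀ t, 0 ≤ v t) ∧
      (∀ᵐ t ∂(volume.restrict (Set.Ioo a b)),
        Tendsto (fun s : ℝ => dist (γ s) (γ t) / |s - t|) (𝓝[≠] t) (𝓝 (v t))) ∧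
      ∀ m : ℝ → ℝ, IsACBound a b γ m →
        ∀ᵐ t ∂(volume.restrict (Set.Ioo a b)), v t ≤ m t := by
  obtain ⟨m, hm⟩ := hAC
  obtain ⟨D, hDc, hD⟩ : TopologicalSpace.IsSeparable (γ '' Ioo a b) := by
    rw [image_eq_range]
    exact TopologicalSpace.isSeparable_range
      (continuousOn_iff_continuous_domRestrict.1 (hm.continuousOn hab.le))
  have := hDc.to_subtype
  have hv := hm.isACBound_supAbsDerivDist hab.le hD
  refine ⟨supAbsDerivDist γ D, hv.1, hv.2.1, ?_, fun m' hm' =>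
    (ae_restrict_iff' measurableSet_Ioo).2 (hm'.ae_supAbsDerivDist_le hab.le D)⟩
  refine (ae_restrict_iff' measurableSet_Ioo).2 ?_
  filter_upwards [hv.ae_eventually_dist_div_lt hab.le] with t hup ht
  exact tendsto_order.2 ⟨fun _ hc => eventually_lt_dist_div_of_lt_supAbsDerivDist hc, hup ht⟩

/-- **Existence and minimality of the metric derivative.** If `γ : (a,b) → X` is absolutely
continuous (i.e., admits some integrable bound `m` as above), then for a.e. `t ∈ (a,b)`
the metric derivative `|γ'|(t) = lim_{s → t} d(γ(s), γ(t))/|s − t|` exists; it is given a.e.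
by a nonnegative function `v ∈ L¹(a,b)` which satisfies `v ≤ m` a.e. on `(a,b)` for every
admissible bound `m`. -/
theorem metric_derivative_exists_ae_and_minimal {X : Type*} [MetricSpace X] [CompleteSpace X]
    (a b : ℝ) (hab : a < b) (γ : ℝ → X)
    (hAC : ∃ m : ℝ → ℝ, IsACBound a b γ m) :
    ∃ v : ℝ → ℝ, IntegrableOn v (Set.Ioo a b) ∧ (∀ t, 0 ≤ v t) ∧
      (∀ᵐ t ∂(volume.restrict (Set.Ioo a b)),
        Tendsto (fun s : ℝ => dist (γ s) (γ t) / |s - t|) (𝓝[≠] t) (𝓝 (v t))) ∧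
      ∀ m : ℝ → ℝ, IsACBound a b γ m →
        ∀ᵐ t ∂(volume.restrict (Set.Ioo a b)), v t ≤ m t :=
  metric_derivative_exists_ae_and_minimal_general a b hab γ hAC
end

section
/- Let N ≥ 1 and let C : Fin N → Fin N → ℝ be any cost matrix. Then there exists a permutation σ of Fin N such that for every doubly stochastic N×N matrix M (i.e., M has nonnegative entries, every row sums to 1, and every column sums to 1), one has Σ_{i} C i (σ i) ≤ Σ_{i,j} M i j · C i j. In particular, the minimum of the linear transport cost over all doubly stochastic matrices is attained at a permutation matrix. -/
open Finset

/-- **Optimal transport between uniform discrete measures is a permutation.**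
For any cost matrix `C` on `N × N` points, there is a permutation `σ` whose transport cost
is at most the cost of any doubly stochastic matrix `M` (nonnegative entries, rows and
columns summing to `1`): `Σ_i C i (σ i) ≤ Σ_{i,j} M i j · C i j`. -/
theorem exists_perm_minimizing_over_doubly_stochastic (N : ℕ) (hN : 1 ≤ N)
    (C : Fin N → Fin N → ℝ) :
    ∃ σ : Equiv.Perm (Fin N), ∀ M : Fin N → Fin N → ℝ,
      (∀ i j, 0 ≤ M i j) → (∀ i, ∑ j, M i j = 1) → (∀ j, ∑ i, M i j = 1) →
      ∑ i, C i (σ i) ≤ ∑ i, ∑ j, M i j * C i j := by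
  obtain ⟨σ, -, hσ⟩ := Finset.exists_min_image Finset.univ
    (fun τ : Equiv.Perm (Fin N) => ∑ i, C i (τ i)) ⟨1, Finset.mem_univ _⟩
  refine ⟨σ, fun M hM0 hrow hcol => ?_⟩
  have hmem : (Matrix.of M) ∈ doublyStochastic ℝ (Fin N) := by
    rw [mem_doublyStochastic_iff_sum]
    exact ⟨fun i j => hM0 i j, hrow, hcol⟩
  obtain ⟨w, hw0, hw1, hwM⟩ := exists_eq_sum_perm_of_mem_doublyStochastic hmem
  have key : ∀ i j, M i j = ∑ τ : Equiv.Perm (Fin N), w τ * (τ.permMatrix ℝ) i j := by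
    intro i j
    have := congrFun (congrFun hwM i) j
    simpa [Matrix.sum_apply] using this.symm
  calc ∑ i, C i (σ i) = ∑ τ : Equiv.Perm (Fin N), w τ * ∑ i, C i (σ i) := by
        rw [← Finset.sum_mul, hw1, one_mul]
    _ ≤ ∑ τ : Equiv.Perm (Fin N), w τ * ∑ i, C i (τ i) := by
        refine Finset.sum_le_sum fun τ _ => ?_
        exact mul_le_mul_of_nonneg_left (hσ τ (Finset.mem_univ _)) (hw0 τ)
    _ = ∑ i, ∑ j, M i j * C i j := by
        have : ∀ i, ∑ j, M i j * C i j = ∑ τ : Equiv.Perm (Fin N), w τ * C i (τ i) := by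
          intro i
          simp only [key, Finset.sum_mul]
          rw [Finset.sum_comm]
          refine Finset.sum_congr rfl fun τ _ => ?_
          simp [Equiv.Perm.permMatrix, Equiv.toPEquiv_apply,
            mul_comm, mul_assoc, eq_comm]
        simp only [this, Finset.mul_sum]
        exact Finset.sum_comm.symm
end

section
/- Let γ : ℝ → ℝ^d be twice continuously differentiable, let t ∈ ℝ, let k ≥ 1 be an integer, and let h > 0. Then ‖γ'(t) − (1/k) · Σ_{j=1}^{k} (γ(t + j·h) − γ(t − j·h)) / (2·j·h)‖ ≤ (k·h/2) · sup_{s ∈ [t − k·h, t + k·h]} ‖γ''(s)‖, where ‖·‖ is the Euclidean norm on ℝ^d. -/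
/-!
Put `g(s) = γ(t+s) - γ(t-s) - 2s γ'(t)`. Then `g(0) = 0` and
`g'(s) = (γ'(t+s) - γ'(t)) + (γ'(t-s) - γ'(t))`, which the mean value inequality for `γ'` bounds by
`2Ms`, where `M` bounds `‖γ''‖`. Hence `‖g(a)‖ ≤ Ma²`, i.e. the centered difference with step `a`
is within `Ma/2` of `γ'(t)`. Each step `jh` is at most `kh`, so each of the `k` centered
differences, and hence their average, is within `Mkh/2` of `γ'(t)`.
-/

open Finset

section CenteredDifference

variable {E : Type*} [NormedAddCommGroup E] [NormedSpace ℝ E]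

theorem norm_sub_sub_two_mul_smul_le {f f' : ℝ → E} {t a C : ℝ} (ha : 0 ≤ a)
    (hf : ∀ s ∈ Set.Icc (t - a) (t + a), HasDerivAt f (f' s) s)
    (hf' : ∀ s ∈ Set.Icc (t - a) (t + a), ‖f' s - f' t‖ ≤ C * |s - t|) :
    ‖f (t + a) - f (t - a) - (2 * a) • f' t‖ ≤ C * a ^ 2 := by
  set g : ℝ → E := fun s => f (t + s) - f (t - s) - (2 * s) • f' t
  have hg : ∀ s ∈ Set.Icc 0 a,
      HasDerivAt g (f' (t + s) + f' (t - s) - (2 : ℝ) • f' t) s := by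
    rintro s ⟨hs0, hsa⟩
    have hplus := (hf (t + s) ⟨by linarith, by linarith⟩).comp_const_add t s
    have hminus := (hf (t - s) ⟨by linarith, by linarith⟩).comp_const_sub t s
    have hlin := ((hasDerivAt_id s).const_mul (2 : ℝ)).smul_const (f' t)
    have hsum := (hplus.sub hminus).sub hlin
    rw [sub_neg_eq_add, mul_one] at hsum
    exact hsum
  have hg' : ∀ s ∈ Set.Ico 0 a,
      ‖f' (t + s) + f' (t - s) - (2 : ℝ) • f' t‖ ≤ 2 * C * s := by
    rintro s ⟨hs0, hsa⟩
    have hplus := hf' (t + s) ⟨by linarith, by linarith⟩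
    have hminus := hf' (t - s) ⟨by linarith, by linarith⟩
    rw [add_sub_cancel_left, abs_of_nonneg hs0] at hplus
    rw [sub_sub_cancel_left, abs_neg, abs_of_nonneg hs0] at hminus
    calc ‖f' (t + s) + f' (t - s) - (2 : ℝ) • f' t‖
        = ‖(f' (t + s) - f' t) + (f' (t - s) - f' t)‖ := by rw [two_smul]; congr 1; abel
      _ ≤ C * s + C * s := norm_add_le_of_le hplus hminus
      _ = 2 * C * s := by ring
  have hquad : ∀ x, HasDerivAt (fun s => C * s ^ 2) (2 * C * x) x := fun x => by
    simpa [mul_comm, mul_left_comm, mul_assoc] using (hasDerivAt_pow 2 x).const_mul C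
  exact image_norm_le_of_norm_deriv_right_le_deriv_boundary
    (fun s hs => (hg s hs).continuousAt.continuousWithinAt)
    (fun s hs => (hg s (Set.Ico_subset_Icc_self hs)).hasDerivWithinAt) (by simp [g]) hquad hg'
    (Set.right_mem_Icc.mpr ha)

theorem norm_deriv_sub_centered_difference_le {f f' : ℝ → E} {t a C : ℝ} (ha : 0 < a)
    (hf : ∀ s ∈ Set.Icc (t - a) (t + a), HasDerivAt f (f' s) s)
    (hf' : ∀ s ∈ Set.Icc (t - a) (t + a), ‖f' s - f' t‖ ≤ C * |s - t|) :
    ‖f' t - (2 * a)⁻¹ • (f (t + a) - f (t - a))‖ ≤ C * a / 2 := by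
  have h2a : 0 < 2 * a := by positivity
  calc ‖f' t - (2 * a)⁻¹ • (f (t + a) - f (t - a))‖
      = ‖(2 * a)⁻¹ • (f (t + a) - f (t - a) - (2 * a) • f' t)‖ := by
        rw [← norm_neg, smul_sub (2 * a)⁻¹ _ ((2 * a) • f' t), smul_smul, inv_mul_cancel₀ h2a.ne',
          one_smul, neg_sub]
    _ = (2 * a)⁻¹ * ‖f (t + a) - f (t - a) - (2 * a) • f' t‖ := by
        rw [norm_smul, Real.norm_of_nonneg (inv_nonneg.mpr h2a.le)]
    _ ≤ (2 * a)⁻¹ * (C * a ^ 2) := by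
        gcongr
        exact norm_sub_sub_two_mul_smul_le ha.le hf hf'
    _ = C * a / 2 := by field_simp

theorem norm_sub_average_le {ι : Type*} {s : Finset ι} (hs : s.Nonempty) {v : E} {w : ι → E}
    {B : ℝ} (hw : ∀ i ∈ s, ‖v - w i‖ ≤ B) :
    ‖v - (1 / (#s : ℝ)) • ∑ i ∈ s, w i‖ ≤ B := by
  have hcard : (0 : ℝ) < #s := by exact_mod_cast hs.card_pos
  have hsum : v - (1 / (#s : ℝ)) • ∑ i ∈ s, w i = (1 / (#s : ℝ)) • ∑ i ∈ s, (v - w i) := by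
    rw [sum_sub_distrib, sum_const, ← Nat.cast_smul_eq_nsmul ℝ, smul_sub, smul_smul,
      one_div_mul_cancel hcard.ne', one_smul]
  calc ‖v - (1 / (#s : ℝ)) • ∑ i ∈ s, w i‖
      = (1 / (#s : ℝ)) * ‖∑ i ∈ s, (v - w i)‖ := by
        rw [hsum, norm_smul, Real.norm_of_nonneg (by positivity)]
    _ ≤ (1 / (#s : ℝ)) * (#s * B) := by
        gcongr
        simpa using norm_sum_le_of_le s hw
    _ = B := by field_simp

end CenteredDifference

/-- **Error bound for the averaged centered-difference derivative estimator.**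
If `γ : ℝ → ℝ^d` is `C²`, `k ≥ 1` and `h > 0`, then the average of the `k` centered
differences with steps `h, 2h, …, kh` approximates `γ'(t)` with error at most
`(kh/2) · sup_{s ∈ [t−kh, t+kh]} ‖γ''(s)‖`. -/
theorem avg_centered_difference_error_bound {d : ℕ} (γ : ℝ → EuclideanSpace ℝ (Fin d))
    (hγ : ContDiff ℝ 2 γ) (t : ℝ) (k : ℕ) (hk : 1 ≤ k) (h : ℝ) (hh : 0 < h) :
    ‖deriv γ t -
        (1 / (k : ℝ)) •
          ∑ j ∈ Finset.Icc 1 k,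
            (2 * (j : ℝ) * h)⁻¹ • (γ (t + j * h) - γ (t - j * h))‖ ≤
      ((k : ℝ) * h / 2) *
        sSup ((fun s => ‖deriv (deriv γ) s‖) '' Set.Icc (t - k * h) (t + k * h)) := by
  have hγ' : ContDiff ℝ 1 (deriv γ) := hγ.deriv'
  set M := sSup ((fun s => ‖deriv (deriv γ) s‖) '' Set.Icc (t - k * h) (t + k * h))
  have hM : ∀ s ∈ Set.Icc (t - k * h) (t + k * h), ‖deriv (deriv γ) s‖ ≤ M := fun s hs =>
    le_csSup (isCompact_Icc.image_of_continuousOn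
      (hγ'.continuous_deriv le_rfl).norm.continuousOn).bddAbove (Set.mem_image_of_mem _ hs)
  have hkh : 0 ≤ (k : ℝ) * h := by positivity
  have hM0 : 0 ≤ M := (norm_nonneg _).trans (hM t ⟨by linarith, by linarith⟩)
  have hlip : ∀ s ∈ Set.Icc (t - k * h) (t + k * h), ‖deriv γ s - deriv γ t‖ ≤ M * |s - t| :=
    fun s hs => by
      simpa [Real.norm_eq_abs] using (convex_Icc _ _).norm_image_sub_le_of_norm_hasDerivWithin_le
        (fun x _ => ((hγ'.differentiable one_ne_zero) x).hasDerivAt.hasDerivWithinAt) hM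
        ⟨by linarith, by linarith⟩ hs
  have hterm : ∀ j ∈ Finset.Icc 1 k,
      ‖deriv γ t - (2 * (j : ℝ) * h)⁻¹ • (γ (t + j * h) - γ (t - j * h))‖ ≤ k * h / 2 * M := by
    intro j hj
    obtain ⟨hj1, hjk⟩ := Finset.mem_Icc.mp hj
    have hjh : 0 < (j : ℝ) * h := by positivity
    have hjkh : (j : ℝ) * h ≤ k * h := by gcongr
    rw [mul_assoc]
    calc _ ≤ M * (j * h) / 2 := norm_deriv_sub_centered_difference_le hjh
          (fun s _ => ((hγ.differentiable (by norm_num)) s).hasDerivAt)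
          (fun s hs => hlip s (Set.Icc_subset_Icc (by linarith) (by linarith) hs))
      _ ≤ k * h / 2 * M := by nlinarith
  simpa using norm_sub_average_le (Finset.nonempty_Icc.mpr hk) hterm
end
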